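/- Let G = (V, E) with V = P ⊔ N be a proper tagged probe interval graph with probes P and nonprobes N such that the induced subgraph G_P is connected. Let B_1, …, B_t be the blocks of G_P, enumerated according to a canonical representation of the reduced graph of G_P, with block canonical sequence S̃ : {1, …, 2t} → {1, …, t}. Then for every w ∈ N having at least two block-neighbors among B_1, …, B_t, there do not exist positions s_1 ≤ t_1 < s_2 ≤ t_2 such that both position ranges [s_1, t_1] and [s_2, t_2] are perfect block substrings of w in S̃. -/
import Mathlib


open Set

/-- `S : Fin (2*t) → Fin t` is the canonical sequence of the canonical interval
representation with left endpoints `ℓ` and right endpoints `r`. -/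
def IsCanonSeq {t : ℕ} (ℓ r : Fin t → ℝ) (S : Fin (2 * t) → Fin t) : Prop :=
  ∃ val : Fin (2 * t) → ℝ, StrictMono val ∧
    Set.range val = Set.range ℓ ∪ Set.range r ∧
    ∀ k, ℓ (S k) = val k ∨ r (S k) = val k

/-- Block `B k` is a block-neighbor of `w`: some vertex of `B k` is adjacent to `w`. -/
def BlockNbr {V : Type*} {t : ℕ} (G : SimpleGraph V) (B : Fin t → Set V)
    (w : V) (k : Fin t) : Prop :=
  ∃ x ∈ B k, G.Adj x w

/-- The position range `[s, t']` is a perfect block substring of the nonprobe `w`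
in the block canonical sequence `S`. -/
def PerfectBlockSubstring {V : Type*} {t : ℕ} (G : SimpleGraph V)
    (B : Fin t → Set V) (S : Fin (2 * t) → Fin t) (w : V)
    (s t' : Fin (2 * t)) : Prop :=
  (∀ k, s ≤ k → k ≤ t' → BlockNbr G B w (S k)) ∧
  (∀ m : Fin t, BlockNbr G B w m → ∃ k, s ≤ k ∧ k ≤ t' ∧ S k = m)

/-- in a PTPIG whose probe subgraph `G_P` is connected, with blocks
`B 0, …, B (t-1)` of `G_P` enumerated according to a canonical representation of the
reduced graph of `G_P` and block canonical sequence `S`, a nonprobe `w` with at least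
two block-neighbors cannot have two disjoint perfect block substrings in `S`. -/
theorem stmt9 {V : Type*} [Fintype V] (G : SimpleGraph V) (P N : Set V)
    (hPN : P = Nᶜ)
    (hind : ∀ w ∈ N, ∀ w' ∈ N, ¬ G.Adj w w')
    -- G is a PTPIG with probes P and nonprobes N:
    (hPTPIG : ∃ a b : V → ℝ,
      (∀ x, a x ≤ b x) ∧
      (∀ x ∈ P, ∀ y ∈ P, x ≠ y →
        (G.Adj x y ↔ (Icc (a x) (b x) ∩ Icc (a y) (b y)).Nonempty)) ∧
      (∀ x ∈ P, ∀ y ∈ P, x ≠ y → ¬ Icc (a x) (b x) ⊂ Icc (a y) (b y)) ∧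
      (∀ x ∈ P, ∀ w ∈ N,
        (G.Adj x w ↔ a x ∈ Icc (a w) (b w) ∨ b x ∈ Icc (a w) (b w))))
    -- G_P is connected:
    (hconn : (SimpleGraph.induce P G).Connected)
    -- B 0, …, B (t-1) are the blocks of G_P (classes of equal closed neighborhoods):
    {t : ℕ} (B : Fin t → Set V)
    (hBsub : ∀ k, B k ⊆ P) (hBne : ∀ k, (B k).Nonempty)
    (hBcover : ∀ x ∈ P, ∃ k, x ∈ B k)
    (hBdisj : ∀ k k' : Fin t, k ≠ k' → Disjoint (B k) (B k'))
    (hBblocks : ∀ x ∈ P, ∀ y ∈ P,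
      ((∃ k, x ∈ B k ∧ y ∈ B k) ↔ (∀ z ∈ P, ((z = x ∨ G.Adj x z) ↔ (z = y ∨ G.Adj y z)))))
    -- the enumeration of the blocks comes from a canonical representation of the
    -- reduced graph of G_P:
    (ℓ r : Fin t → ℝ)
    (hlr : ∀ k, ℓ k ≤ r k) (hl : StrictMono ℓ) (hr : StrictMono r)
    (hne : ∀ k k' : Fin t, ℓ k ≠ r k')
    (hAdj : ∀ k k' : Fin t, k ≠ k' →
      ((∃ x ∈ B k, ∃ y ∈ B k', G.Adj x y) ↔
        (Icc (ℓ k) (r k) ∩ Icc (ℓ k') (r k')).Nonempty))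
    -- the block canonical sequence:
    (S : Fin (2 * t) → Fin t) (hS : IsCanonSeq ℓ r S) :
    ∀ w ∈ N, (∃ k₁ k₂ : Fin t, k₁ ≠ k₂ ∧ BlockNbr G B w k₁ ∧ BlockNbr G B w k₂) →
      ¬ ∃ s₁ t₁ s₂ t₂ : Fin (2 * t), s₁ ≤ t₁ ∧ t₁ < s₂ ∧ s₂ ≤ t₂ ∧
        PerfectBlockSubstring G B S w s₁ t₁ ∧ PerfectBlockSubstring G B S w s₂ t₂ := by
    classical
  rintro w hw ⟨k₁, k₂, hk12, hn1, hn2⟩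
  rintro ⟨s₁, t₁, s₂, t₂, h11, h12, h13, hP1, hP2⟩
  obtain ⟨val, hmono, hrange, hval⟩ := hS
  have hlt : ∀ m : Fin t, ℓ m < r m := fun m => (hlr m).lt_of_ne (hne m m)
  have hLmem : ∀ m : Fin t, ∃ j, val j = ℓ m := by
    intro m
    have h : ℓ m ∈ Set.range val := by
      rw [hrange]; exact Set.mem_union_left _ ⟨m, rfl⟩
    exact h
  have hRmem : ∀ m : Fin t, ∃ j, val j = r m := by
    intro m
    have h : r m ∈ Set.range val := by
      rw [hrange]; exact Set.mem_union_right _ ⟨m, rfl⟩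
    exact h
  choose pL hpL using hLmem
  choose pR hpR using hRmem
  have hSpL : ∀ m, S (pL m) = m := by
    intro m
    rcases hval (pL m) with h | h
    · exact hl.injective (h.trans (hpL m))
    · exact absurd ((h.trans (hpL m)).symm) (hne m (S (pL m)))
  have hSpR : ∀ m, S (pR m) = m := by
    intro m
    rcases hval (pR m) with h | h
    · exact absurd (h.trans (hpR m)) (hne (S (pR m)) m)
    · exact hr.injective (h.trans (hpR m))
  have hpLR : ∀ m, pL m < pR m := by
    intro m
    have h : val (pL m) < val (pR m) := by rw [hpL, hpR]; exact hlt m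
    exact hmono.lt_iff_lt.mp h
  have key : ∀ m, BlockNbr G B w m →
      (s₁ ≤ pL m ∧ pL m ≤ t₁) ∧ (s₂ ≤ pR m ∧ pR m ≤ t₂) := by
    intro m hm
    obtain ⟨j₁, ha1, hb1, hc1⟩ := hP1.2 m hm
    obtain ⟨j₂, ha2, hb2, hc2⟩ := hP2.2 m hm
    have hj : j₁ < j₂ := lt_of_le_of_lt hb1 (lt_of_lt_of_le h12 ha2)
    have e1 : j₁ = pL m ∨ j₁ = pR m := by
      rcases hval j₁ with h | h
      · rw [hc1] at h
        exact Or.inl (hmono.injective ((hpL m).trans h)).symm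
      · rw [hc1] at h
        exact Or.inr (hmono.injective ((hpR m).trans h)).symm
    have e2 : j₂ = pL m ∨ j₂ = pR m := by
      rcases hval j₂ with h | h
      · rw [hc2] at h
        exact Or.inl (hmono.injective ((hpL m).trans h)).symm
      · rw [hc2] at h
        exact Or.inr (hmono.injective ((hpR m).trans h)).symm
    rcases e1 with h1 | h1 <;> rcases e2 with h2 | h2
    · rw [h1, h2] at hj; exact absurd hj (lt_irrefl _)
    · rw [h1] at ha1 hb1; rw [h2] at ha2 hb2
      exact ⟨⟨ha1, hb1⟩, ⟨ha2, hb2⟩⟩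
    · rw [h1, h2] at hj; exact absurd (hpLR m) (lt_asymm hj)
    · rw [h1, h2] at hj; exact absurd hj (lt_irrefl _)
  set Kf : Finset (Fin t) := Finset.univ.filter (fun m => BlockNbr G B w m) with hKf
  have hmemK : ∀ m, m ∈ Kf ↔ BlockNbr G B w m := by intro m; simp [hKf]
  have hKne : Kf.Nonempty := ⟨k₁, (hmemK k₁).mpr hn1⟩
  set kmin := Kf.min' hKne with hkmin
  set kmax := Kf.max' hKne with hkmax
  have hminN : BlockNbr G B w kmin := (hmemK _).mp (Kf.min'_mem hKne)
  have hmaxN : BlockNbr G B w kmax := (hmemK _).mp (Kf.max'_mem hKne)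
  have hminle : ∀ m, BlockNbr G B w m → kmin ≤ m :=
    fun m hm => Kf.min'_le m ((hmemK m).mpr hm)
  have hlemax : ∀ m, BlockNbr G B w m → m ≤ kmax :=
    fun m hm => Kf.le_max' m ((hmemK m).mpr hm)
  have hmm : kmin ≤ kmax := hlemax kmin hminN
  have hne' : kmin ≠ kmax := by
    intro h
    apply hk12
    have e1 : k₁ = kmin := le_antisymm (by rw [h]; exact hlemax k₁ hn1) (hminle k₁ hn1)
    have e2 : k₂ = kmin := le_antisymm (by rw [h]; exact hlemax k₂ hn2) (hminle k₂ hn2)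
    exact e1.trans e2.symm
  have hkey : ℓ kmax < r kmin := by
    have h1 : pL kmax < pR kmin :=
      lt_of_le_of_lt (key kmax hmaxN).1.2 (lt_of_lt_of_le h12 (key kmin hminN).2.1)
    have h2 := hmono h1
    rwa [hpL, hpR] at h2
  have hlmm : ℓ kmin ≤ ℓ kmax := hl.monotone hmm
  have hrmm : r kmin ≤ r kmax := hr.monotone hmm
  have claimA : ∀ m : Fin t, ℓ kmin < r m → r m < ℓ kmax → BlockNbr G B w m := by
    intro m hA hB
    have h1 : pL kmin < pR m := hmono.lt_iff_lt.mp (by rw [hpL, hpR]; exact hA)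
    have h2 : pR m < pL kmax := hmono.lt_iff_lt.mp (by rw [hpL, hpR]; exact hB)
    have h3 := hP1.1 (pR m) (le_trans (key kmin hminN).1.1 h1.le)
      (le_trans h2.le (key kmax hmaxN).1.2)
    rwa [hSpR] at h3
  have claimB : ∀ m : Fin t, r kmin < ℓ m → ℓ m < r kmax → BlockNbr G B w m := by
    intro m hA hB
    have h1 : pR kmin < pL m := hmono.lt_iff_lt.mp (by rw [hpL, hpR]; exact hA)
    have h2 : pL m < pR kmax := hmono.lt_iff_lt.mp (by rw [hpL, hpR]; exact hB)
    have h3 := hP2.1 (pL m) (le_trans (key kmin hminN).2.1 h1.le)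
      (le_trans h2.le (key kmax hmaxN).2.2)
    rwa [hSpL] at h3
  have adjB : ∀ k k' : Fin t, k ≠ k' → ∀ x ∈ B k, ∀ y ∈ B k',
      (G.Adj x y ↔ (Icc (ℓ k) (r k) ∩ Icc (ℓ k') (r k')).Nonempty) := by
    intro k k' hkk x hx y hy
    constructor
    · intro h
      exact (hAdj k k' hkk).mp ⟨x, hx, y, hy, h⟩
    · intro h
      obtain ⟨x', hx', y', hy', hxy⟩ := (hAdj k k' hkk).mpr h
      have H1 := (hBblocks x (hBsub k hx) x' (hBsub k hx')).mp ⟨k, hx, hx'⟩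
      have h1 : y' = x ∨ G.Adj x y' := (H1 y' (hBsub k' hy')).mpr (Or.inr hxy)
      have h2 : G.Adj x y' := by
        rcases h1 with e | a
        · exact (Set.disjoint_left.mp (hBdisj k k' hkk) hx (e ▸ hy')).elim
        · exact a
      have H2 := (hBblocks y (hBsub k' hy) y' (hBsub k' hy')).mp ⟨k', hy, hy'⟩
      have h3 : x = y ∨ G.Adj y x := (H2 x (hBsub k hx)).mpr (Or.inr h2.symm)
      rcases h3 with e | a
      · exact (Set.disjoint_left.mp (hBdisj k k' hkk) (e ▸ hx) hy).elim
      · exact a.symm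
  obtain ⟨x, hx⟩ := hBne kmin
  obtain ⟨y, hy⟩ := hBne kmax
  have hxy : G.Adj x y := (adjB kmin kmax hne' x hx y hy).mpr
    ⟨ℓ kmax, ⟨hlmm, hkey.le⟩, ⟨le_refl _, hlr kmax⟩⟩
  have hsame : ∀ z ∈ P, ((z = x ∨ G.Adj x z) ↔ (z = y ∨ G.Adj y z)) := by
    intro z hz
    obtain ⟨m, hzm⟩ := hBcover z hz
    by_cases hm1 : m = kmin
    · have hzm' : z ∈ B kmin := hm1 ▸ hzm
      have H := (hBblocks z hz x (hBsub kmin hx)).mp ⟨kmin, hzm', hx⟩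
      refine iff_of_true ?_ ?_
      · rcases (H x (hBsub kmin hx)).mpr (Or.inl rfl) with e | a
        · exact Or.inl e.symm
        · exact Or.inr a.symm
      · rcases (H y (hBsub kmax hy)).mpr (Or.inr hxy) with e | a
        · exact Or.inl e.symm
        · exact Or.inr a.symm
    · by_cases hm2 : m = kmax
      · have hzm' : z ∈ B kmax := hm2 ▸ hzm
        have H := (hBblocks z hz y (hBsub kmax hy)).mp ⟨kmax, hzm', hy⟩
        refine iff_of_true ?_ ?_
        · rcases (H x (hBsub kmin hx)).mpr (Or.inr hxy.symm) with e | a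
          · exact Or.inl e.symm
          · exact Or.inr a.symm
        · rcases (H y (hBsub kmax hy)).mpr (Or.inl rfl) with e | a
          · exact Or.inl e.symm
          · exact Or.inr a.symm
      · have hzx : z ≠ x := fun e =>
          Set.disjoint_left.mp (hBdisj m kmin hm1) hzm (by rw [e]; exact hx)
        have hzy : z ≠ y := fun e =>
          Set.disjoint_left.mp (hBdisj m kmax hm2) hzm (by rw [e]; exact hy)
        have e1 := adjB kmin m (Ne.symm hm1) x hx z hzm
        have e2 := adjB kmax m (Ne.symm hm2) y hy z hzm
        constructor
        · rintro (e | a)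
          · exact absurd e hzx
          · obtain ⟨c, ⟨hc1, hc2⟩, ⟨hc3, hc4⟩⟩ := e1.mp a
            refine Or.inr (e2.mpr ?_)
            by_cases hmK : BlockNbr G B w m
            · exact ⟨ℓ kmax, ⟨le_refl _, hlr kmax⟩,
                ⟨hl.monotone (hlemax m hmK), le_trans hkey.le (hr.monotone (hminle m hmK))⟩⟩
            · have hrm : ℓ kmax ≤ r m := by
                by_contra hcon
                push_neg at hcon
                have hgt : ℓ kmin < r m := lt_of_le_of_ne (le_trans hc1 hc4) (hne kmin m)
                exact hmK (claimA m hgt hcon)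
              exact ⟨max (ℓ m) (ℓ kmax),
                ⟨le_max_right _ _, max_le (le_trans hc3 (le_trans hc2 hrmm)) (hlr kmax)⟩,
                ⟨le_max_left _ _, max_le (hlr m) hrm⟩⟩
        · rintro (e | a)
          · exact absurd e hzy
          · obtain ⟨c, ⟨hc1, hc2⟩, ⟨hc3, hc4⟩⟩ := e2.mp a
            refine Or.inr (e1.mpr ?_)
            by_cases hmK : BlockNbr G B w m
            · exact ⟨ℓ kmax, ⟨hlmm, hkey.le⟩,
                ⟨hl.monotone (hlemax m hmK), le_trans hkey.le (hr.monotone (hminle m hmK))⟩⟩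
            · have hlm : ℓ m ≤ r kmin := by
                by_contra hcon
                push_neg at hcon
                have h2' : ℓ m < r kmax := lt_of_le_of_ne (le_trans hc3 hc2) (hne m kmax)
                exact hmK (claimB m hcon h2')
              exact ⟨max (ℓ m) (ℓ kmin),
                ⟨le_max_right _ _, max_le hlm (hlr kmin)⟩,
                ⟨le_max_left _ _, max_le (hlr m) (le_trans hlmm (le_trans hc1 hc4))⟩⟩
  obtain ⟨k, hxk, hyk⟩ := (hBblocks x (hBsub kmin hx) y (hBsub kmax hy)).mpr hsame
  have e1 : k = kmin := by
    by_contra h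
    exact Set.disjoint_left.mp (hBdisj k kmin h) hxk hx
  have e2 : k = kmax := by
    by_contra h
    exact Set.disjoint_left.mp (hBdisj k kmax h) hyk hy
  exact hne' (e1 ▸ e2)
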